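/- arXiv:1902.01227 — 2 statements merged into one kernel-verified Lean document; each statement's English description precedes it below -/
import Mathlib

section
/- Let d ≥ 1, α ∈ (0,2], m > 1, β = 1/(d(m-1)+α), k = dΓ(d/2)/((d(m-1)+α)·2^α·Γ(1+α/2)·Γ((d+α)/2)), and C = Γ(d/2 + α/(2(m-1)) + 1)·k^{d/α}/(π^{d/2}·Γ(α/(2(m-1))+1)). Then for every t > 0, the function u(x,t) = C·t^{-dβ}·(1 - k^{2/α}·‖x‖²/t^{2β})₊^{α/(2(m-1))} integrates to 1 over ℝ^d, i.e. ∫_{ℝ^d} u(x,t) dx = 1. -/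
/-!
In polar coordinates and after the substitution `u = ‖y‖²`, the integral of `(1 - ‖y‖²)₊ ^ p`
over `ℝⁿ` becomes `π ^ (n/2) / Γ(n/2)` times the Beta integral `B(n/2, p + 1)`, that is
`π ^ (n/2) Γ(p + 1) / Γ(n/2 + p + 1)`. The Barenblatt profile at time `t` is this function
rescaled by `‖x‖ ↦ k ^ (1/α) ‖x‖ / t ^ β`; the Jacobian `t ^ (dβ) / k ^ (d/α)` of the rescaling
cancels the prefactor `t ^ (-dβ)` and the `k ^ (d/α)` in `C`, and the remaining Gamma factors
are exactly those in `C`.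
-/

open Real MeasureTheory Module

theorem Real.integral_rpow_mul_one_sub_rpow {a b : ℝ} (ha : 0 < a) (hb : 0 < b) :
    ∫ x in (0 : ℝ)..1, x ^ (a - 1) * (1 - x) ^ (b - 1) = Gamma a * Gamma b / Gamma (a + b) := by
  have hβ := Complex.betaIntegral_eq_Gamma_mul_div a b (by simpa) (by simpa)
  rw [← Complex.ofReal_inj, Complex.ofReal_div, Complex.ofReal_mul, ← Complex.Gamma_ofReal,
    ← Complex.Gamma_ofReal, ← Complex.Gamma_ofReal, Complex.ofReal_add, ← hβ,
    Complex.betaIntegral, ← intervalIntegral.integral_ofReal]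
  refine intervalIntegral.integral_congr fun x hx => ?_
  rw [Set.uIcc_of_le zero_le_one] at hx
  push_cast
  rw [Complex.ofReal_cpow hx.1, Complex.ofReal_cpow (sub_nonneg.2 hx.2)]
  push_cast
  ring_nf

theorem integral_rpow_mul_max_one_sub_rpow {s p : ℝ} (hs : 0 < s) (hp : 0 < p) :
    ∫ u in Set.Ioi (0 : ℝ), u ^ (s - 1) * max (1 - u) 0 ^ p
      = Gamma s * Gamma (p + 1) / Gamma (s + p + 1) := by
  have hvanish : ∀ u ∈ Set.Ioi (0 : ℝ) \ Set.Ioc 0 1, u ^ (s - 1) * max (1 - u) 0 ^ p = 0 := by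
    rintro u ⟨hu0, hu1⟩
    have : 1 < u := not_le.1 fun h => hu1 ⟨hu0, h⟩
    rw [max_eq_right (by linarith), zero_rpow hp.ne', mul_zero]
  rw [setIntegral_eq_of_subset_of_forall_sdiff_eq_zero measurableSet_Ioi Set.Ioc_subset_Ioi_self
    hvanish, ← intervalIntegral.integral_of_le zero_le_one, add_assoc,
    ← Real.integral_rpow_mul_one_sub_rpow hs (by linarith)]
  refine intervalIntegral.integral_congr fun u hu => ?_
  rw [Set.uIcc_of_le zero_le_one] at hu
  simp only [max_eq_left (sub_nonneg.2 hu.2), add_sub_cancel_right]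

theorem integral_pow_mul_max_one_sub_sq_rpow {n : ℕ} (hn : 0 < n) {p : ℝ} (hp : 0 < p) :
    ∫ y in Set.Ioi (0 : ℝ), y ^ (n - 1) * max (1 - y ^ 2) 0 ^ p
      = Gamma (n / 2) * Gamma (p + 1) / (2 * Gamma (n / 2 + p + 1)) := by
  rw [div_mul_eq_div_div_swap, ← integral_rpow_mul_max_one_sub_rpow (by positivity) hp,
    ← integral_comp_rpow_Ioi_of_pos (g := fun u => u ^ ((n : ℝ) / 2 - 1) * max (1 - u) 0 ^ p)
      two_pos, ← integral_div]
  refine setIntegral_congr_fun measurableSet_Ioi fun y hy => ?_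
  have hpow : y ^ (n - 1) = y ^ ((2 : ℝ) - 1) * (y ^ (2 : ℝ)) ^ ((n : ℝ) / 2 - 1) := by
    rw [← rpow_mul (le_of_lt hy), ← rpow_add hy, ← rpow_natCast, Nat.cast_sub hn]
    ring_nf
  rw [hpow, rpow_two, smul_eq_mul]
  ring

section InnerProductSpace

variable {E : Type*} [NormedAddCommGroup E] [InnerProductSpace ℝ E] [FiniteDimensional ℝ E]
  [MeasurableSpace E] [BorelSpace E] [Nontrivial E]

theorem integral_max_one_sub_norm_sq_rpow {p : ℝ} (hp : 0 < p) :
    ∫ x : E, max (1 - ‖x‖ ^ 2) 0 ^ p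
      = π ^ ((finrank ℝ E : ℝ) / 2) * Gamma (p + 1) / Gamma (finrank ℝ E / 2 + p + 1) := by
  have hsqrt : √π ^ finrank ℝ E = π ^ ((finrank ℝ E : ℝ) / 2) := by
    rw [sqrt_eq_rpow, ← rpow_natCast, ← rpow_mul pi_pos.le]
    ring_nf
  have hn : (0 : ℝ) < finrank ℝ E := Nat.cast_pos.2 finrank_pos
  rw [integral_fun_norm_addHaar volume (fun y => max (1 - y ^ 2) 0 ^ p), nsmul_eq_mul,
    smul_eq_mul, measureReal_def, InnerProductSpace.volume_ball, ENNReal.ofReal_one, one_pow,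
    one_mul, ENNReal.toReal_ofReal (by positivity), hsqrt]
  simp_rw [smul_eq_mul]
  rw [integral_pow_mul_max_one_sub_sq_rpow finrank_pos hp,
    Gamma_add_one (s := (finrank ℝ E : ℝ) / 2) (by positivity)]
  field_simp

theorem integral_max_one_sub_mul_norm_sq_rpow {a p : ℝ} (ha : 0 < a) (hp : 0 < p) :
    ∫ x : E, max (1 - a * ‖x‖ ^ 2) 0 ^ p
      = π ^ ((finrank ℝ E : ℝ) / 2) * a ^ (-(finrank ℝ E : ℝ) / 2) * Gamma (p + 1)
          / Gamma (finrank ℝ E / 2 + p + 1) := by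
  have hscale : ∀ x : E, a * ‖x‖ ^ 2 = ‖√a • x‖ ^ 2 := fun x => by
    rw [norm_smul, mul_pow, norm_of_nonneg (sqrt_nonneg a), sq_sqrt ha.le]
  have hjac : |(√a ^ finrank ℝ E)⁻¹| = a ^ (-(finrank ℝ E : ℝ) / 2) := by
    rw [abs_of_pos (by positivity), sqrt_eq_rpow, ← rpow_natCast, ← rpow_mul ha.le,
      ← rpow_neg ha.le]
    ring_nf
  simp_rw [hscale]
  rw [Measure.integral_comp_smul volume (fun x : E => max (1 - ‖x‖ ^ 2) 0 ^ p),
    integral_max_one_sub_norm_sq_rpow hp, smul_eq_mul, hjac]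
  ring

end InnerProductSpace

theorem barenblatt_mass_conservation_general (d : ℕ) (hd : 1 ≤ d) (α m β k C : ℝ)
    (hα : α ∈ Set.Ioc (0:ℝ) 2) (hm : 1 < m)
    (hk : k = d * Real.Gamma (d / 2) /
      ((d * (m - 1) + α) * (2:ℝ) ^ α * Real.Gamma (1 + α / 2) *
        Real.Gamma ((d + α) / 2)))
    (hC : C = Real.Gamma ((d:ℝ) / 2 + α / (2 * (m - 1)) + 1) * k ^ ((d:ℝ) / α) /
      (Real.pi ^ ((d:ℝ) / 2) * Real.Gamma (α / (2 * (m - 1)) + 1)))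
    (t : ℝ) (ht : 0 < t) :
    ∫ x : EuclideanSpace ℝ (Fin d),
      C * t ^ (-((d:ℝ) * β)) *
        (max (1 - k ^ (2 / α) * ‖x‖ ^ 2 / t ^ (2 * β)) 0) ^ (α / (2 * (m - 1))) = 1 := by
  have hα0 : 0 < α := hα.1
  have hd0 : (0 : ℝ) < d := by exact_mod_cast hd
  have hm1 : 0 < m - 1 := sub_pos.2 hm
  set p := α / (2 * (m - 1))
  have hp : 0 < p := by positivity
  have hk0 : 0 < k := by rw [hk]; positivity
  have : Nonempty (Fin d) := Fin.pos_iff_nonempty.1 hd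
  have hscale : (k ^ (2 / α) / t ^ (2 * β)) ^ (-(d : ℝ) / 2) = (k ^ (d / α))⁻¹ * t ^ (d * β) := by
    rw [div_rpow (by positivity) (by positivity), ← rpow_mul hk0.le, ← rpow_mul ht.le,
      div_eq_mul_inv, ← rpow_neg ht.le, ← rpow_neg hk0.le]
    ring_nf
  simp_rw [mul_div_right_comm _ (‖_‖ ^ 2)]
  rw [integral_const_mul, integral_max_one_sub_mul_norm_sq_rpow (by positivity) hp,
    finrank_euclideanSpace_fin, hscale, hC, rpow_neg ht.le]
  field_simp

theorem barenblatt_mass_conservation (d : ℕ) (hd : 1 ≤ d) (α m β k C : ℝ)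
    (hα : α ∈ Set.Ioc (0:ℝ) 2) (hm : 1 < m)
    (hβ : β = 1 / (d * (m - 1) + α))
    (hk : k = d * Real.Gamma (d / 2) /
      ((d * (m - 1) + α) * (2:ℝ) ^ α * Real.Gamma (1 + α / 2) *
        Real.Gamma ((d + α) / 2)))
    (hC : C = Real.Gamma ((d:ℝ) / 2 + α / (2 * (m - 1)) + 1) * k ^ ((d:ℝ) / α) /
      (Real.pi ^ ((d:ℝ) / 2) * Real.Gamma (α / (2 * (m - 1)) + 1)))
    (t : ℝ) (ht : 0 < t) :
    ∫ x : EuclideanSpace ℝ (Fin d),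
      C * t ^ (-((d:ℝ) * β)) *
        (max (1 - k ^ (2 / α) * ‖x‖ ^ 2 / t ^ (2 * β)) 0) ^ (α / (2 * (m - 1))) = 1 :=
  barenblatt_mass_conservation_general d hd α m β k C hα hm hk hC t ht
end

section
/- Let d = 1, α ∈ (0,2], and n = 2k+1 with k ≥ 1 an integer. Set m = α/(2k) + 1. Then m > 1, and with β = 1/((m-1)+α) and speed c = κ^{-1/α} (κ the Barenblatt constant for d=1), the Barenblatt profile u(x,t') evaluated at rescaled time t' = t^β coincides with the telegraph process density: Γ(2+α/(m-1))·2^{1-2(α/(2(m-1))+1)}/Γ(α/(2(m-1))+1)² · (1/(ct')) · (1 - x²/(ct')²)₊^{α/(2(m-1))} = Γ(n+1)/(Γ((n+1)/2)²·2ⁿ·ct') · (1 - x²/(ct')²)₊^{(n-1)/2} for all x ∈ ℝ and t' > 0. -/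
open Real MeasureTheory

theorem barenblatt_eq_telegraph_density (k : ℕ) (hk : 1 ≤ k) (α : ℝ)
    (hα : α ∈ Set.Ioc (0:ℝ) 2) (m β κ c : ℝ) (n : ℕ)
    (hm : m = α / (2 * k) + 1) (hβ : β = 1 / ((m - 1) + α))
    (hκ : κ = Real.Gamma (1 / 2) /
      (((m - 1) + α) * (2:ℝ) ^ α * Real.Gamma (1 + α / 2) * Real.Gamma ((1 + α) / 2)))
    (hc : c = κ ^ (-(1 / α))) (hn : n = 2 * k + 1) :
    1 < m ∧ ∀ (x t' : ℝ), 0 < t' →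
      Real.Gamma (2 + α / (m - 1)) * (2:ℝ) ^ (1 - 2 * (α / (2 * (m - 1)) + 1)) /
          (Real.Gamma (α / (2 * (m - 1)) + 1)) ^ 2 * (1 / (c * t')) *
          (max (1 - x ^ 2 / (c * t') ^ 2) 0) ^ (α / (2 * (m - 1)))
        = Real.Gamma ((n:ℝ) + 1) / (Real.Gamma (((n:ℝ) + 1) / 2) ^ 2 * 2 ^ n * c * t') *
          (max (1 - x ^ 2 / (c * t') ^ 2) 0) ^ (((n:ℝ) - 1) / 2) := by
  have hk0 : (0:ℝ) < (k:ℝ) := by exact_mod_cast hk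
  have hα0 : 0 < α := hα.1
  have hm1 : m - 1 = α / (2 * k) := by rw [hm]; ring
  have hm1pos : 0 < m - 1 := by rw [hm1]; positivity
  refine ⟨by linarith, fun x t' ht' => ?_⟩
  have h1 : α / (m - 1) = 2 * k := by
    rw [hm1]; field_simp
  have h2 : α / (2 * (m - 1)) = (k:ℝ) := by
    rw [hm1]; field_simp
  have hncast : ((n:ℝ)) = 2 * k + 1 := by rw [hn]; push_cast; ring
  rw [h1, h2, hncast]
  have hexp : ((2 * (k:ℝ) + 1) - 1) / 2 = (k:ℝ) := by ring
  rw [hexp]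
  have hG1 : Real.Gamma (2 + 2 * (k:ℝ)) = Real.Gamma ((2 * (k:ℝ) + 1) + 1) := by ring_nf
  have hG2 : ((2 * (k:ℝ) + 1) + 1) / 2 = (k:ℝ) + 1 := by ring
  rw [hG1, hG2]
  have h2p : (2:ℝ) ^ (1 - 2 * ((k:ℝ) + 1)) = ((2:ℝ) ^ n)⁻¹ := by
    rw [show (1 - 2 * ((k:ℝ) + 1)) = -(n:ℝ) by rw [hncast]; ring,
      Real.rpow_neg (by norm_num), Real.rpow_natCast]
  rw [h2p]
  ring
end
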